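/- Let (C, D) be a clan and assume C has binary products. Then the full subcategory of C consisting of the separated objects has all finite limits. -/

import Mathlib

open CategoryTheory CategoryTheory.Limits

universe v u

/-- A class of display maps on a category `C`: a `MorphismProperty` such that every morphism
satisfying it admits a pullback along every morphism into its codomain, and which is stable
under base change. -/
structure IsDisplayClass {C : Type u} [Category.{v} C] (D : MorphismProperty C) : Prop where
  exists_pullback : ∀ {X Y Z : C} {d : X ⟶ Y}, D d → ∀ f : Z ⟶ Y,
    ∃ (P : C) (fst : P ⟶ X) (snd : P ⟶ Z), IsPullback fst snd d f
  isStableUnderBaseChange : D.IsStableUnderBaseChange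

/-- A clan: a category with a terminal object together with a class of display maps containing
all identities, stable under composition, and containing the unique morphism from every object
to the terminal object. -/
structure IsClan {C : Type u} [Category.{v} C] [HasTerminal C] (D : MorphismProperty C) :
    Prop where
  toIsDisplayClass : IsDisplayClass D
  id_mem : ∀ X : C, D (𝟙 X)
  comp_mem : ∀ {X Y Z : C} (f : X ⟶ Y) (g : Y ⟶ Z), D f → D g → D (f ≫ g)
  terminal_from_mem : ∀ X : C, D (terminal.from X)

/-!
Pullbacks of `f : X ⟶ Z` and `g : Y ⟶ Z` over a separated `Z` exist: they are the base change
of the display map `diag Z` along `prod.map f g`. Separated objects are closed under subobjects,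
since for a mono `q : P ⟶ W` the map `diag P` is the base change of `diag W` along
`prod.map q q`, and under binary products, since `diag (X ⨯ Y)` is `prod.map (diag X) (diag Y)`
up to isomorphism and `prod.map d e` is a composite of base changes of `d` and `e`. A pullback
embeds into the product of its legs, so it is separated; a terminal object has an invertible
diagonal. Terminal object and pullbacks give all finite limits.
-/

attribute [local simp] prod.lift_fst prod.lift_snd prod.lift_fst_assoc prod.lift_snd_assoc

namespace CategoryTheory.Limits

variable {C : Type u} [Category.{v} C] [HasBinaryProducts C]

lemma isPullback_diag_of_mono {P W : C} (q : P ⟶ W) [Mono q] :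
    IsPullback q (diag P) (diag W) (prod.map q q) := by
  have legs (s : PullbackCone (diag W) (prod.map q q)) :
      s.snd ≫ prod.fst ≫ q = s.fst ∧ s.snd ≫ prod.snd ≫ q = s.fst :=
    ⟨by simpa using (congrArg (· ≫ prod.fst) s.condition).symm,
      by simpa using (congrArg (· ≫ prod.snd) s.condition).symm⟩
  refine ⟨⟨by ext <;> simp⟩, ⟨PullbackCone.IsLimit.mk _ (fun s ↦ s.snd ≫ prod.fst)
    (fun s ↦ by simpa using (legs s).1) (fun s ↦ ?_) (fun s m _ hm ↦ by simp [← hm])⟩⟩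
  ext
  · simp
  · simpa [← cancel_mono q, (legs s).2] using (legs s).1

lemma isPullback_fst_snd_of_isPullback_diag {P X Y Z : C} {f : X ⟶ Z} {g : Y ⟶ Z}
    {p : P ⟶ Z} {q : P ⟶ X ⨯ Y} (h : IsPullback p q (diag Z) (prod.map f g)) :
    IsPullback (q ≫ prod.fst) (q ≫ prod.snd) f g := by
  have hp₁ : p = q ≫ prod.fst ≫ f := by simpa using congrArg (· ≫ prod.fst) h.w
  have hp₂ : p = q ≫ prod.snd ≫ g := by simpa using congrArg (· ≫ prod.snd) h.w
  have comm : (q ≫ prod.fst) ≫ f = (q ≫ prod.snd) ≫ g := by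
    simp only [Category.assoc, ← hp₁, ← hp₂]
  refine ⟨⟨comm⟩, ⟨PullbackCone.IsLimit.mk comm
    (fun s ↦ h.lift (s.fst ≫ f) (prod.lift s.fst s.snd) (by ext <;> simp [s.condition]))
    (fun s ↦ by simp) (fun s ↦ by simp) fun s m hm₁ hm₂ ↦ ?_⟩⟩
  apply h.hom_ext
  · simp [hp₁, ← hm₁]
  · ext <;> simp [← hm₁, ← hm₂]

lemma mono_prodLift_of_isLimit_cospan {F : WalkingCospan ⥤ C} {c : Cone F} (hc : IsLimit c) :
    Mono (prod.lift (c.π.app .left) (c.π.app .right)) := by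
  refine ⟨fun a b hab ↦ hc.hom_ext ?_⟩
  have h₁ : a ≫ c.π.app .left = b ≫ c.π.app .left := by
    simpa using congrArg (· ≫ prod.fst) hab
  have h₂ : a ≫ c.π.app .right = b ≫ c.π.app .right := by
    simpa using congrArg (· ≫ prod.snd) hab
  rintro (_ | _ | _)
  · rw [← c.w WalkingCospan.Hom.inl, reassoc_of% h₁]
  · exact h₁
  · exact h₂

noncomputable def prodProdInterchange (X Y : C) : (X ⨯ Y) ⨯ (X ⨯ Y) ≅ (X ⨯ X) ⨯ (Y ⨯ Y) where
  hom := prod.lift (prod.map prod.fst prod.fst) (prod.map prod.snd prod.snd)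
  inv := prod.lift (prod.map prod.fst prod.fst) (prod.map prod.snd prod.snd)
  hom_inv_id := by ext <;> simp
  inv_hom_id := by ext <;> simp

end CategoryTheory.Limits

namespace CategoryTheory.MorphismProperty

variable {C : Type u} [Category.{v} C] [HasBinaryProducts C] {D : MorphismProperty C}

lemma prod_map_id_mem [D.IsStableUnderBaseChange] {X Y : C} {d : X ⟶ Y} (hd : D d) (W : C) :
    D (prod.map d (𝟙 W)) :=
  of_isPullback (IsPullback.of_prod_fst_with_id d W) hd

lemma prod_map_mem [D.IsStableUnderBaseChange] [D.IsStableUnderComposition]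
    {X Y W V : C} {d : X ⟶ Y} {e : W ⟶ V} (hd : D d) (he : D e) : D (prod.map d e) := by
  have hid_e : D (prod.map (𝟙 Y) e) := by
    rw [← D.cancel_right_of_respectsIso _ (prod.braiding Y V).hom, braid_natural,
      D.cancel_left_of_respectsIso]
    exact prod_map_id_mem he Y
  simpa using D.comp_mem _ _ (prod_map_id_mem hd W) hid_e

variable (D) in
def separated : ObjectProperty C := fun Y ↦ D (diag Y)

instance [D.IsStableUnderBaseChange] : D.separated.IsClosedUnderSubobjects where
  prop_of_mono q _ hW := of_isPullback (isPullback_diag_of_mono q) hW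

lemma separated_of_isSubterminal [D.IsStableUnderBaseChange] [D.ContainsIdentities] {X : C}
    (hX : IsSubterminal X) : D.separated X :=
  have := hX.isIso_diag
  D.of_isIso (diag X)

lemma separated_prod [D.IsStableUnderBaseChange] [D.IsStableUnderComposition] {X Y : C}
    (hX : D.separated X) (hY : D.separated Y) : D.separated (X ⨯ Y) := by
  refine (D.arrow_mk_iso_iff (Arrow.isoMk' _ _ (Iso.refl _) (prodProdInterchange X Y) ?_)).2
    (prod_map_mem hX hY)
  ext <;> simp [prodProdInterchange]

instance [D.IsStableUnderBaseChange] [D.ContainsIdentities] :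
    D.separated.IsClosedUnderLimitsOfShape (Discrete.{0} PEmpty) where
  limitsOfShape_le _ := fun ⟨h⟩ ↦
    separated_of_isSubterminal fun _ _ _ ↦ h.isLimit.hom_ext fun j ↦ j.as.elim

instance [D.IsStableUnderBaseChange] [D.IsStableUnderComposition] :
    D.separated.IsClosedUnderLimitsOfShape WalkingCospan where
  limitsOfShape_le _ := fun ⟨h⟩ ↦
    have := mono_prodLift_of_isLimit_cospan h.isLimit
    D.separated.prop_of_mono (prod.lift (h.π.app .left) (h.π.app .right))
      (separated_prod (h.prop_diag_obj _) (h.prop_diag_obj _))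

lemma hasLimit_cospan_of_separated (hD : IsDisplayClass D) (F : WalkingCospan ⥤ C)
    (hF : D.separated (F.obj .one)) : HasLimit F := by
  obtain ⟨P, p, q, h⟩ :=
    hD.exists_pullback hF (prod.map (F.map WalkingCospan.Hom.inl) (F.map WalkingCospan.Hom.inr))
  have := (isPullback_fst_snd_of_isPullback_diag h).hasPullback
  exact hasLimit_of_iso (diagramIsoCospan F).symm

end CategoryTheory.MorphismProperty

/-- in a clan with binary products, the full subcategory of separated objects
has all finite limits. -/
theorem separated_hasFiniteLimits {C : Type u} [Category.{v} C] [HasTerminal C]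
    [HasBinaryProducts C] (D : MorphismProperty C) (hD : IsClan D) :
    HasFiniteLimits (ObjectProperty.FullSubcategory (fun Y : C => D (diag Y))) := by
  have := hD.toIsDisplayClass.isStableUnderBaseChange
  have : D.ContainsIdentities := ⟨hD.id_mem⟩
  have : D.IsStableUnderComposition := ⟨hD.comp_mem⟩
  change HasFiniteLimits D.separated.FullSubcategory
  have : HasTerminal D.separated.FullSubcategory := hasLimitsOfShape_of_closedUnderLimits _ _
  have : HasPullbacks D.separated.FullSubcategory := ⟨fun F ↦
    have := MorphismProperty.hasLimit_cospan_of_separated hD.toIsDisplayClass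
      (F ⋙ D.separated.ι) (F.obj .one).property
    hasLimit_of_closedUnderLimits _ _ F⟩
  exact hasFiniteLimits_of_hasTerminal_and_pullbacks
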